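/- arXiv:math/0612361 — 2 statements merged into one kernel-verified Lean document; each statement's English description precedes it below -/
import Mathlib

section
/- Let P₀ and P₁ be probability measures with P₁ ≪ P₀ and χ²(P₀,P₁) := ∫ (dP₁/dP₀ − 1)² dP₀ ≤ η² for some 0 < η < 1. Then for every event (test) Δ taking values in {0,1}, P₀(Δ = 1) + P₁(Δ = 0) ≥ (1 − √η) P₀(dP₁/dP₀ ≥ 1 − √η) ≥ (1 − √η)(1 − η). -/
open MeasureTheory Real

/-- Lower bound on the sum of error probabilities of any test in terms of the
chi-square distance. -/
theorem stmt_9 {Ω : Type*} [MeasurableSpace Ω]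
    (P₀ P₁ : Measure Ω) [IsProbabilityMeasure P₀] [IsProbabilityMeasure P₁]
    (hac : P₁ ≪ P₀) (η : ℝ) (hη₀ : 0 < η) (hη₁ : η < 1)
    (hchi : ∫⁻ ω, ENNReal.ofReal (((P₁.rnDeriv P₀ ω).toReal - 1) ^ 2) ∂P₀
      ≤ ENNReal.ofReal (η ^ 2))
    (A : Set Ω) (hA : MeasurableSet A) :
    ENNReal.ofReal (1 - Real.sqrt η) *
        P₀ {ω | 1 - Real.sqrt η ≤ (P₁.rnDeriv P₀ ω).toReal} ≤ P₀ A + P₁ Aᶜ ∧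
    ENNReal.ofReal ((1 - Real.sqrt η) * (1 - η)) ≤
      ENNReal.ofReal (1 - Real.sqrt η) *
        P₀ {ω | 1 - Real.sqrt η ≤ (P₁.rnDeriv P₀ ω).toReal} := by
  set c : ℝ := 1 - Real.sqrt η with hc
  set f : Ω → ℝ := fun ω => (P₁.rnDeriv P₀ ω).toReal with hf
  set S : Set Ω := {ω | c ≤ f ω} with hSdef
  have hfm : Measurable f := (Measure.measurable_rnDeriv P₁ P₀).ennreal_toReal
  have hS : MeasurableSet S := measurableSet_le measurable_const hfm
  have hsqrt_pos : 0 < Real.sqrt η := Real.sqrt_pos.mpr hη₀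
  have hsqrt_lt : Real.sqrt η < 1 := by
    rw [show (1:ℝ) = Real.sqrt 1 by simp]
    exact Real.sqrt_lt_sqrt hη₀.le hη₁
  have hc_pos : 0 < c := by simp [hc]; linarith
  have hc_le_one : c ≤ 1 := by
    simp only [hc]; linarith [Real.sqrt_nonneg η]
  constructor
  · -- first inequality
    have h1 : ENNReal.ofReal c * P₀ (Aᶜ ∩ S) ≤ P₁ Aᶜ := by
      rw [← Measure.setLIntegral_rnDeriv hac Aᶜ]
      calc ENNReal.ofReal c * P₀ (Aᶜ ∩ S)
          = ∫⁻ _ in Aᶜ ∩ S, ENNReal.ofReal c ∂P₀ := by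
            rw [setLIntegral_const, mul_comm]
        _ ≤ ∫⁻ ω in Aᶜ ∩ S, P₁.rnDeriv P₀ ω ∂P₀ := by
            refine setLIntegral_mono (Measure.measurable_rnDeriv P₁ P₀) ?_
            intro x hx
            exact ENNReal.ofReal_le_of_le_toReal hx.2
        _ ≤ ∫⁻ ω in Aᶜ, P₁.rnDeriv P₀ ω ∂P₀ :=
            lintegral_mono_set Set.inter_subset_left
    have h2 : P₀ (A ∩ S) ≤ P₀ A := measure_mono Set.inter_subset_left
    have hsplit : P₀ S ≤ P₀ (A ∩ S) + P₀ (Aᶜ ∩ S) := by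
      have : S ⊆ (A ∩ S) ∪ (Aᶜ ∩ S) := by
        intro x hx
        by_cases h : x ∈ A
        · exact Or.inl ⟨h, hx⟩
        · exact Or.inr ⟨h, hx⟩
      exact (measure_mono this).trans (measure_union_le _ _)
    calc ENNReal.ofReal c * P₀ S
        ≤ ENNReal.ofReal c * (P₀ (A ∩ S) + P₀ (Aᶜ ∩ S)) := by
          exact mul_le_mul_right hsplit _
      _ = ENNReal.ofReal c * P₀ (A ∩ S) + ENNReal.ofReal c * P₀ (Aᶜ ∩ S) := by
          ring
      _ ≤ P₀ (A ∩ S) + P₁ Aᶜ := by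
          refine add_le_add ?_ h1
          calc ENNReal.ofReal c * P₀ (A ∩ S) ≤ 1 * P₀ (A ∩ S) := by
                refine mul_le_mul_left ?_ _
                simpa using ENNReal.ofReal_le_one.mpr hc_le_one
            _ = P₀ (A ∩ S) := one_mul _
      _ ≤ P₀ A + P₁ Aᶜ := add_le_add h2 le_rfl
  · -- second inequality
    have hcheb : ENNReal.ofReal η * P₀ {ω | ENNReal.ofReal η ≤
        ENNReal.ofReal ((f ω - 1) ^ 2)} ≤ ENNReal.ofReal (η ^ 2) := by
      exact le_trans (mul_meas_ge_le_lintegral₀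
        (by fun_prop) (ENNReal.ofReal η)) hchi
    have hT : P₀ {ω | ENNReal.ofReal η ≤ ENNReal.ofReal ((f ω - 1) ^ 2)}
        ≤ ENNReal.ofReal η := by
      have hne : ENNReal.ofReal η ≠ 0 := by
        simp [ENNReal.ofReal_eq_zero, not_le, hη₀]
      rw [← ENNReal.mul_le_mul_iff_right hne ENNReal.ofReal_ne_top]
      refine hcheb.trans ?_
      rw [← ENNReal.ofReal_mul hη₀.le]
      exact ENNReal.ofReal_le_ofReal (by nlinarith)
    have hsub : Sᶜ ⊆ {ω | ENNReal.ofReal η ≤ ENNReal.ofReal ((f ω - 1) ^ 2)} := by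
      intro ω hω
      simp only [hSdef, Set.mem_compl_iff, Set.mem_setOf_eq, not_le] at hω ⊢
      refine ENNReal.ofReal_le_ofReal ?_
      have h1 : Real.sqrt η < 1 - f ω := by linarith
      have h2 : (Real.sqrt η) ^ 2 ≤ (1 - f ω) ^ 2 := by nlinarith [hsqrt_pos.le]
      rw [Real.sq_sqrt hη₀.le] at h2
      nlinarith
    have hSc : P₀ Sᶜ ≤ ENNReal.ofReal η := (measure_mono hsub).trans hT
    have hSlb : ENNReal.ofReal (1 - η) ≤ P₀ S := by
      have hone : P₀ S + P₀ Sᶜ = 1 := by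
        rw [measure_add_measure_compl hS]; simp
      have : (1 : ENNReal) ≤ P₀ S + ENNReal.ofReal η := by
        rw [← hone]; exact add_le_add le_rfl hSc
      have h' := tsub_le_iff_right.mpr this
      calc ENNReal.ofReal (1 - η) = 1 - ENNReal.ofReal η := by
            rw [ENNReal.ofReal_sub 1 hη₀.le, ENNReal.ofReal_one]
        _ ≤ P₀ S := h'
    rw [ENNReal.ofReal_mul hc_pos.le]
    exact mul_le_mul_right hSlb _
end

section
/- Let d₀, d₁ ∈ ℝ with |d₁ − d₀| ≥ 2φ for some φ > 0, and let P₀, P₁ be probability measures with χ²(P₀, P₁) ≤ η², 0 < η < 1. Then for any measurable estimator T (a random variable on the common sample space), max( E₀|T − d₀|, E₁|T − d₁| ) ≥ φ(1−√η)(1−η). -/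
open MeasureTheory Real

/-- Abstract two-point lower bound for estimation via the chi-square distance. -/
theorem stmt_15 {Ω : Type*} [MeasurableSpace Ω]
    (P₀ P₁ : Measure Ω) [IsProbabilityMeasure P₀] [IsProbabilityMeasure P₁]
    (hac : P₁ ≪ P₀) (η : ℝ) (hη₀ : 0 < η) (hη₁ : η < 1)
    (hchi : ∫⁻ ω, ENNReal.ofReal (((P₁.rnDeriv P₀ ω).toReal - 1) ^ 2) ∂P₀
      ≤ ENNReal.ofReal (η ^ 2))
    (d₀ d₁ φ : ℝ) (hφ : 0 < φ) (hd : 2 * φ ≤ |d₁ - d₀|)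
    (T : Ω → ℝ) (hT : Measurable T) :
    ENNReal.ofReal (φ * (1 - Real.sqrt η) * (1 - η)) ≤
      max (∫⁻ ω, ENNReal.ofReal |T ω - d₀| ∂P₀)
        (∫⁻ ω, ENNReal.ofReal |T ω - d₁| ∂P₁) := by
  set f := P₁.rnDeriv P₀ with hfdef
  have hfm : Measurable f := Measure.measurable_rnDeriv _ _
  have hsq0 : 0 ≤ Real.sqrt η := Real.sqrt_nonneg η
  have hsq1 : Real.sqrt η < 1 := by
    have := Real.sqrt_lt_sqrt hη₀.le hη₁
    simpa using this
  set s : ℝ := 1 - Real.sqrt η with hsdef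
  have hs0 : 0 < s := by simp only [hsdef]; linarith
  have hs1 : s ≤ 1 := by simp only [hsdef]; linarith
  set A : Set Ω := {ω | ENNReal.ofReal s ≤ f ω} with hAdef
  have hAm : MeasurableSet A := measurableSet_le measurable_const hfm
  -- Chebyshev: P₀ Aᶜ ≤ η
  have hcheb : P₀ Aᶜ ≤ ENNReal.ofReal η := by
    have h1 : ENNReal.ofReal η * P₀ Aᶜ ≤ ENNReal.ofReal (η ^ 2) := by
      calc ENNReal.ofReal η * P₀ Aᶜ
          = ∫⁻ ω in Aᶜ, ENNReal.ofReal η ∂P₀ := (setLIntegral_const _ _).symm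
        _ ≤ ∫⁻ ω in Aᶜ, ENNReal.ofReal (((f ω).toReal - 1) ^ 2) ∂P₀ := by
            refine setLIntegral_mono ((hfm.ennreal_toReal.sub measurable_const).pow_const 2).ennreal_ofReal ?_
            intro ω hω
            have hlt : f ω < ENNReal.ofReal s := by
              simpa [hAdef, not_le] using hω
            have hne : f ω ≠ ⊤ := (hlt.trans_le le_top).ne
            have ht : (f ω).toReal < s := (ENNReal.lt_ofReal_iff_toReal_lt hne).mp hlt
            refine ENNReal.ofReal_le_ofReal ?_
            have hη' : Real.sqrt η * Real.sqrt η = η := Real.mul_self_sqrt hη₀.le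
            nlinarith [sq_nonneg ((f ω).toReal - 1 + Real.sqrt η)]
        _ ≤ ENNReal.ofReal (η ^ 2) := le_trans (setLIntegral_le_lintegral _ _) hchi
    have h2 : ENNReal.ofReal (η ^ 2) = ENNReal.ofReal η * ENNReal.ofReal η := by
      rw [← ENNReal.ofReal_mul hη₀.le, sq]
    rw [h2] at h1
    exact (ENNReal.mul_le_mul_iff_right (by simp [hη₀]) ENNReal.ofReal_ne_top).mp h1
  -- hence P₀ A ≥ 1 - η
  have hPA : ENNReal.ofReal (1 - η) ≤ P₀ A := by
    have hA_eq : P₀ A = 1 - P₀ Aᶜ := by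
      have := measure_compl hAm.compl (measure_ne_top P₀ Aᶜ)
      simpa [compl_compl] using this
    rw [hA_eq]
    calc ENNReal.ofReal (1 - η) = ENNReal.ofReal 1 - ENNReal.ofReal η :=
          ENNReal.ofReal_sub 1 hη₀.le
      _ = 1 - ENNReal.ofReal η := by simp
      _ ≤ 1 - P₀ Aᶜ := tsub_le_tsub_left hcheb 1
  -- change of measure
  have hmeas1 : Measurable fun ω => ENNReal.ofReal |T ω - d₁| :=
    ((hT.sub measurable_const).abs).ennreal_ofReal
  have hmeas0 : Measurable fun ω => ENNReal.ofReal |T ω - d₀| :=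
    ((hT.sub measurable_const).abs).ennreal_ofReal
  have hcom : ∫⁻ ω, ENNReal.ofReal |T ω - d₁| ∂P₁
      = ∫⁻ ω, f ω * ENNReal.ofReal |T ω - d₁| ∂P₀ :=
    (lintegral_rnDeriv_mul hac hmeas1.aemeasurable).symm
  -- main bound on the sum
  have hsum : ENNReal.ofReal (2 * φ * s * (1 - η)) ≤
      (∫⁻ ω, ENNReal.ofReal |T ω - d₀| ∂P₀) + ∫⁻ ω, ENNReal.ofReal |T ω - d₁| ∂P₁ := by
    rw [hcom, ← lintegral_add_left hmeas0]
    calc ENNReal.ofReal (2 * φ * s * (1 - η))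
        = ENNReal.ofReal (s * (2 * φ)) * ENNReal.ofReal (1 - η) := by
          rw [← ENNReal.ofReal_mul (by positivity)]; ring_nf
      _ ≤ ENNReal.ofReal (s * (2 * φ)) * P₀ A := by
          exact mul_le_mul_right hPA _
      _ = ∫⁻ ω in A, ENNReal.ofReal (s * (2 * φ)) ∂P₀ := (setLIntegral_const _ _).symm
      _ ≤ ∫⁻ ω in A, (ENNReal.ofReal |T ω - d₀| + f ω * ENNReal.ofReal |T ω - d₁|) ∂P₀ := by
          refine setLIntegral_mono (hmeas0.add (hfm.mul hmeas1)) ?_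
          intro ω hω
          have hωA : ENNReal.ofReal s ≤ f ω := hω
          have htri : 2 * φ ≤ |T ω - d₀| + |T ω - d₁| := by
            have : |d₁ - d₀| ≤ |d₁ - T ω| + |T ω - d₀| := abs_sub_le _ _ _
            rw [abs_sub_comm d₁ (T ω)] at this
            linarith
          calc ENNReal.ofReal (s * (2 * φ))
              = ENNReal.ofReal s * ENNReal.ofReal (2 * φ) :=
                ENNReal.ofReal_mul hs0.le
            _ ≤ ENNReal.ofReal s * (ENNReal.ofReal |T ω - d₀| + ENNReal.ofReal |T ω - d₁|) := by
                refine mul_le_mul_right ?_ _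
                rw [← ENNReal.ofReal_add (abs_nonneg _) (abs_nonneg _)]
                exact ENNReal.ofReal_le_ofReal htri
            _ = ENNReal.ofReal s * ENNReal.ofReal |T ω - d₀|
                  + ENNReal.ofReal s * ENNReal.ofReal |T ω - d₁| := by ring
            _ ≤ ENNReal.ofReal |T ω - d₀| + f ω * ENNReal.ofReal |T ω - d₁| := by
                refine add_le_add ?_ (mul_le_mul_left hωA _)
                calc ENNReal.ofReal s * ENNReal.ofReal |T ω - d₀|
                    ≤ 1 * ENNReal.ofReal |T ω - d₀| := by
                      refine mul_le_mul_left ?_ _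
                      simpa using ENNReal.ofReal_le_ofReal hs1
                  _ = ENNReal.ofReal |T ω - d₀| := one_mul _
      _ ≤ ∫⁻ ω, (ENNReal.ofReal |T ω - d₀| + f ω * ENNReal.ofReal |T ω - d₁|) ∂P₀ :=
          setLIntegral_le_lintegral _ _
  -- conclude via max ≥ sum / 2
  have h2max : (∫⁻ ω, ENNReal.ofReal |T ω - d₀| ∂P₀) + (∫⁻ ω, ENNReal.ofReal |T ω - d₁| ∂P₁)
      ≤ 2 * max (∫⁻ ω, ENNReal.ofReal |T ω - d₀| ∂P₀) (∫⁻ ω, ENNReal.ofReal |T ω - d₁| ∂P₁) := by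
    rw [two_mul]
    exact add_le_add (le_max_left _ _) (le_max_right _ _)
  have hfinal : 2 * ENNReal.ofReal (φ * (1 - Real.sqrt η) * (1 - η)) ≤
      2 * max (∫⁻ ω, ENNReal.ofReal |T ω - d₀| ∂P₀) (∫⁻ ω, ENNReal.ofReal |T ω - d₁| ∂P₁) := by
    refine le_trans ?_ (le_trans hsum h2max)
    rw [show (2 : ENNReal) = ENNReal.ofReal 2 by simp, ← ENNReal.ofReal_mul (by norm_num)]
    refine ENNReal.ofReal_le_ofReal ?_
    simp only [hsdef]; ring_nf; rfl
  exact (ENNReal.mul_le_mul_iff_right two_ne_zero (by norm_num)).mp hfinal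
end
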